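/- arXiv:1409.6657 — 3 statements merged into one kernel-verified Lean document; each statement's English description precedes it below -/
import Mathlib

section
/- The Castelnuovo–Mumford regularity of a Gorenstein Koszul standard graded ring S/I is at most projdim(S/I) - lp₂(S/I) + 1. -/
/-! Duality sends the unit `b₀₀ = 1` to a nonzero corner `b_{p,p+r}` and sends the last linear
strand entry `b_{ℓ,ℓ+1}` to `b_{p-ℓ,p+r-ℓ-1}`; Backelin's bound `t_i ≤ 2i` at these two positions
gives `r ≤ p` and `r ≤ p - ℓ + 1`. -/

/-- The length of the linear strand `lp₂ = max {i | b_{i,i+1} ≠ 0}` of a Betti table. -/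
noncomputable def lp2T (b : ℕ → ℕ → ℕ) : ℕ := sSup {i | b i (i + 1) ≠ 0}

section BettiTable

variable {b : ℕ → ℕ → ℕ} {p r : ℕ}

theorem betti_corner_ne_zero (hb00 : b 0 0 = 1)
    (hgor : ∀ i ≤ p, ∀ j ≤ p + r, b i j = b (p - i) (p + r - j)) :
    b p (p + r) ≠ 0 := by
  have h := hgor 0 p.zero_le 0 (p + r).zero_le
  simp only [Nat.sub_zero, hb00] at h
  omega

theorem le_sub_add_one_of_linear_strand {i : ℕ} (hi : b i (i + 1) ≠ 0) (hip : i ≤ p)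
    (hkoszul : ∀ i j, b i j ≠ 0 → j ≤ 2 * i)
    (hgor : ∀ i ≤ p, ∀ j ≤ p + r, b i j = b (p - i) (p + r - j)) :
    r ≤ p - i + 1 := by
  rcases Nat.eq_zero_or_pos r with rfl | hr
  · omega
  have hdual : b (p - i) (p + r - (i + 1)) ≠ 0 := by
    rwa [← hgor i hip (i + 1) (by omega)]
  have := hkoszul _ _ hdual
  omega

end BettiTable

theorem stmt7_general (b : ℕ → ℕ → ℕ) (p r : ℕ)
    (hproj : IsGreatest {i | ∃ j, b i j ≠ 0} p)
    (hb00 : b 0 0 = 1)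
    (hkoszul : ∀ i j, b i j ≠ 0 → j ≤ 2 * i)
    (hgor : ∀ i ≤ p, ∀ j ≤ p + r, b i j = b (p - i) (p + r - j)) :
    r ≤ p - lp2T b + 1 := by
  have hstrand_le : ∀ i ∈ {i | b i (i + 1) ≠ 0}, i ≤ p := fun i hi => hproj.2 ⟨i + 1, hi⟩
  rcases Set.eq_empty_or_nonempty {i | b i (i + 1) ≠ 0} with hempty | hne
  · have hcorner := hkoszul p (p + r) (betti_corner_ne_zero hb00 hgor)
    rw [lp2T, hempty, csSup_empty, Nat.bot_eq_zero]
    omega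
  · have hmem : b (lp2T b) (lp2T b + 1) ≠ 0 := Nat.sSup_mem hne ⟨p, hstrand_le⟩
    exact le_sub_add_one_of_linear_strand hmem (hstrand_le _ hmem) hkoszul hgor

/-- The regularity of a Gorenstein Koszul standard graded ring `S/I` is at most
`projdim(S/I) - lp₂(S/I) + 1`.  Here the ring is modelled by its (finitely
supported) Betti table `b`, with projective dimension `p` and regularity `r`;
standard gradedness gives `b_{0,0} = 1` and `b_{0,j} = 0` for `j ≠ 0`, Koszulness
gives Backelin's bound `t_i ≤ 2i`, and Gorensteinness gives the Poincaré duality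
`b_{i,j} = b_{p-i,p+r-j}`. -/
theorem stmt7 (b : ℕ → ℕ → ℕ) (p r : ℕ)
    (hfin : (Function.support fun q : ℕ × ℕ => b q.1 q.2).Finite)
    (hproj : IsGreatest {i | ∃ j, b i j ≠ 0} p)
    (hreg : IsGreatest {d | ∃ i, b i (i + d) ≠ 0} r)
    (hb00 : b 0 0 = 1) (hb0 : ∀ j ≠ 0, b 0 j = 0)
    (hkoszul : ∀ i j, b i j ≠ 0 → j ≤ 2 * i)
    (hgor : ∀ i ≤ p, ∀ j ≤ p + r, b i j = b (p - i) (p + r - j)) :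
    r ≤ p - lp2T b + 1 :=
  stmt7_general b p r hproj hb00 hkoszul hgor
end

section
/- Let Δ be a banner (d-1)-dimensional simplicial complex with d ≥ 3. Then every induced subcomplex Γ of Δ with H̃_{d-2}(Γ) ≠ 0 has at least 2d - 2 vertices. -/
open Finset

/-- An abstract simplicial complex on a finite linearly ordered vertex set `V`
(containing the empty face). -/
structure SComplex (V : Type) [Fintype V] [LinearOrder V] where
  faces : Set (Finset V)
  empty_mem : (∅ : Finset V) ∈ faces
  down_closed : ∀ ⦃F G : Finset V⦄, F ∈ faces → G ⊆ F → G ∈ faces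

namespace SComplex

variable {V : Type} [Fintype V] [LinearOrder V]

/-- Faces of cardinality `j`. -/
def simplex (K : SComplex V) (j : ℕ) := {F : Finset V // F ∈ K.faces ∧ F.card = j}

/-- Simplicial chains supported on faces of cardinality `j` (so `j = n + 1` gives the
`n`-dimensional chains, and `j = 0` corresponds to the empty face, yielding
*reduced* homology below). -/
abbrev chains (R : Type) [CommRing R] (K : SComplex V) (j : ℕ) := K.simplex j →₀ R

/-- The simplicial boundary map, from chains on faces of cardinality `j + 1`
to chains on faces of cardinality `j`. -/
noncomputable def bdry (R : Type) [CommRing R] (K : SComplex V) (j : ℕ) :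
    K.chains R (j + 1) →ₗ[R] K.chains R j :=
  Finsupp.lsum R fun s => LinearMap.toSpanSingleton R _
    (∑ v ∈ s.1.attach, ((-1 : R) ^ ((s.1.filter (· < v.1)).card)) •
      Finsupp.single (⟨s.1.erase v.1, K.down_closed s.2.1 (Finset.erase_subset _ _),
        by simp [Finset.card_erase_of_mem v.2, s.2.2]⟩ : K.simplex j) (1 : R))

/-- Reduced `n`-cycles (chains on faces of cardinality `n + 1` with zero boundary). -/
noncomputable def cycles (R : Type) [CommRing R] (K : SComplex V) (n : ℕ) :
    Submodule R (K.chains R (n + 1)) := LinearMap.ker (K.bdry R n)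

/-- Reduced `n`-boundaries. -/
noncomputable def bdries (R : Type) [CommRing R] (K : SComplex V) (n : ℕ) :
    Submodule R (K.chains R (n + 1)) := LinearMap.range (K.bdry R (n + 1))

/-- Reduced simplicial homology of `K` in dimension `n` with coefficients in `R`,
realized as the image of the cycles in the chains modulo the boundaries. -/
noncomputable abbrev Hred (R : Type) [CommRing R] (K : SComplex V) (n : ℕ) :=
  ↥(Submodule.map (K.bdries R n).mkQ (K.cycles R n))

/-- The induced subcomplex on a vertex subset `W`. -/
def induced (K : SComplex V) (W : Finset V) : SComplex V where
  faces := {F | F ∈ K.faces ∧ F ⊆ W}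
  empty_mem := ⟨K.empty_mem, Finset.empty_subset _⟩
  down_closed := fun _ _ hF hG => ⟨K.down_closed hF.1 hG, hG.trans hF.2⟩

/-- The underlying graph (1-skeleton) of a simplicial complex. -/
def skeleton (K : SComplex V) : SimpleGraph V where
  Adj u v := u ≠ v ∧ ({u, v} : Finset V) ∈ K.faces
  symm := ⟨by
    intro u v h
    refine ⟨h.1.symm, ?_⟩
    rw [Finset.pair_comm]
    exact h.2⟩
  loopless := ⟨fun v h => h.1 rfl⟩

/-- The vertex set of a simplicial complex. -/
def vertexSet (K : SComplex V) : Set V := {v | {v} ∈ K.faces}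

/-- A set of vertices is complete if its elements are pairwise adjacent. -/
def IsComplete (K : SComplex V) (W : Finset V) : Prop :=
  ∀ u ∈ W, ∀ v ∈ W, u ≠ v → ({u, v} : Finset V) ∈ K.faces

/-- A complex is flag if it is the clique complex of its 1-skeleton. -/
def IsFlag (K : SComplex V) : Prop := ∀ W : Finset V, K.IsComplete W → W ∈ K.faces

/-- One plus the dimension of `K`: the maximal cardinality of a face. -/
noncomputable def dimP1 (K : SComplex V) : ℕ := sSup {j | ∃ F ∈ K.faces, F.card = j}

/-- `K` is pure, with all facets of cardinality `d`. -/
def Pure (K : SComplex V) (d : ℕ) : Prop :=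
  ∀ F ∈ K.faces, ∃ G ∈ K.faces, F ⊆ G ∧ G.card = d

/-- `K` is a minimal `n`-cycle over `R`: it is pure `n`-dimensional and supports
precisely one homology `n`-class (up to scalars), whose support is all of `K`. -/
def IsMinimalCycle (R : Type) [CommRing R] (K : SComplex V) (n : ℕ) : Prop :=
  K.dimP1 = n + 1 ∧ K.Pure (n + 1) ∧
    ∃ ζ ∈ K.cycles R n, (∀ s : K.simplex (n + 1), ζ s ≠ 0) ∧
      ∀ z ∈ K.cycles R n, ∃ c : R, z = c • ζ

end SComplex

/-- Graded Betti numbers of the Stanley–Reisner ring of `K` over `k`, via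
Hochster's formula: `b_{i,j} = ∑_{#W = j} dim_k H̃_{j-i-1}(K_W)`. -/
noncomputable def bettiH (k : Type) [Field k] {V : Type} [Fintype V] [LinearOrder V]
    (K : SComplex V) (i j : ℕ) : ℕ :=
  ∑ W ∈ Finset.powersetCard j (Finset.univ : Finset V),
    Module.finrank k (SComplex.Hred k (K.induced W) (j - i - 1))

/-- A graph is `m`-connected if it has at least `m` vertices and removing
any set of fewer than `m` vertices leaves a connected graph. -/
def KConn {V : Type} [Fintype V] (G : SimpleGraph V) (m : ℕ) : Prop :=
  m ≤ Fintype.card V ∧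
    ∀ S : Finset V, S.card < m → (SimpleGraph.induce ((↑S : Set V)ᶜ) G).Connected

/-- The vertex connectivity of a graph: the largest `m` such that it is `m`-connected. -/
noncomputable def connectivity {V : Type} [Fintype V] (G : SimpleGraph V) : ℕ :=
  sSup {m | KConn G m}


namespace SComplex

variable {V : Type} [Fintype V] [LinearOrder V]

/-- The link of a face `σ` of `K`. -/
def link (K : SComplex V) (s : Finset V) (hs : s ∈ K.faces) : SComplex V where
  faces := {t | t ∩ s = ∅ ∧ t ∪ s ∈ K.faces}
  empty_mem := ⟨Finset.empty_inter s, by simpa using hs⟩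
  down_closed := by
    intro F G hF hG
    constructor
    · rw [← Finset.subset_empty, ← hF.1]
      exact Finset.inter_subset_inter hG (Finset.Subset.refl s)
    · exact K.down_closed hF.2 (Finset.union_subset_union hG (Finset.Subset.refl s))

/-- The degree of a face: the maximal cardinality of a facet containing it. -/
noncomputable def degree (K : SComplex V) (s : Finset V) : ℕ :=
  sSup {j | ∃ F ∈ K.faces, s ⊆ F ∧ F.card = j}

/-- `K` is banner if every critical complete set of size at least `dim K + 1`
is a face of `K`. -/
def IsBanner (K : SComplex V) : Prop :=
  ∀ W : Finset V, K.IsComplete W → (∃ v ∈ W, W.erase v ∈ K.faces) →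
    K.dimP1 ≤ W.card → W ∈ K.faces

/-- `K` is (isomorphic to) the boundary of the 2-simplex. -/
def IsBdTwoSimplex (K : SComplex V) : Prop :=
  ∃ a b c : V, a ≠ b ∧ a ≠ c ∧ b ≠ c ∧
    K.faces = {F | F ⊆ ({a, b, c} : Finset V) ∧ F ≠ ({a, b, c} : Finset V)}

/-- The banner number of `K`: the least `b` such that the link of every face of
cardinality `b` and degree `dim K + 1` is banner or the boundary of the 2-simplex. -/
noncomputable def bannerNumber (K : SComplex V) : ℕ :=
  sInf {b | ∀ s : Finset V, ∀ hs : s ∈ K.faces, s.card = b → K.degree s = K.dimP1 →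
    IsBanner (K.link s hs) ∨ IsBdTwoSimplex (K.link s hs)}

end SComplex

/-!
Write `n = d - 2`. By induction on `n` and then on `|T|`, every `n`-cycle `z` of a complex that is
banner from size `n + 2` on, supported on a vertex set `T` with `|T| ≤ 2n + 1`, is a boundary.
If `T` is complete, the banner condition, applied one vertex at a time starting from a face of `z`,
makes `T` a face, and `z` bounds the cone over it. Otherwise pick a non-edge `v w` in `T`: the part
of `z` through `v` is `v * X` with `X` an `(n-1)`-cycle of the link of `v` on the `|T| - 2` vertices
`T \ {v, w}`. The link is banner from size `n + 1` on, so `X = ∂B₁`, and `z - v * X + B₁` is a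
cycle on `T \ {v}`, which bounds by induction. So a nonzero class of `Γ` needs at least `2n + 2`
vertices.
-/

namespace FinsetChain

variable (R : Type) [CommRing R] {V : Type} [LinearOrder V]

noncomputable def sgn (F : Finset V) (v : V) : R := (-1) ^ (F.filter (· < v)).card

noncomputable def bd : (Finset V →₀ R) →ₗ[R] (Finset V →₀ R) :=
  Finsupp.lsum R fun F => LinearMap.toSpanSingleton R _
    (∑ v ∈ F, sgn R F v • Finsupp.single (F.erase v) (1 : R))

noncomputable def cone (v : V) : (Finset V →₀ R) →ₗ[R] (Finset V →₀ R) :=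
  Finsupp.lsum R fun F => LinearMap.toSpanSingleton R _
    (if v ∈ F then 0 else sgn R F v • Finsupp.single (insert v F) (1 : R))

noncomputable def contract (v : V) : (Finset V →₀ R) →ₗ[R] (Finset V →₀ R) :=
  Finsupp.lsum R fun F => LinearMap.toSpanSingleton R _
    (if v ∈ F then sgn R F v • Finsupp.single (F.erase v) (1 : R) else 0)

variable {R}

lemma sgn_mul_self (F : Finset V) (v : V) : sgn R F v * sgn R F v = 1 := by
  rw [sgn, ← pow_add]
  exact Even.neg_one_pow ⟨_, rfl⟩

lemma sgn_erase_self (F : Finset V) (v : V) : sgn R (F.erase v) v = sgn R F v := by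
  rw [sgn, sgn, Finset.filter_erase, Finset.erase_eq_of_notMem (by simp)]

lemma sgn_insert_self (F : Finset V) (v : V) : sgn R (insert v F) v = sgn R F v := by
  rw [sgn, sgn, Finset.filter_insert, if_neg (lt_irrefl v)]

lemma sgn_erase {F : Finset V} {u : V} (hu : u ∈ F) (v : V) :
    sgn R (F.erase u) v = (if u < v then -1 else 1) * sgn R F v := by
  rw [sgn, sgn, Finset.filter_erase]
  split_ifs with h
  · have hmem : u ∈ F.filter (· < v) := Finset.mem_filter.2 ⟨hu, h⟩
    obtain ⟨k, hk⟩ := Nat.exists_eq_add_one_of_ne_zero (Finset.card_ne_zero_of_mem hmem)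
    rw [Finset.card_erase_of_mem hmem, hk, Nat.add_sub_cancel, pow_succ]
    ring
  · rw [Finset.erase_eq_of_notMem (by simp [h]), one_mul]

lemma sgn_insert {F : Finset V} {v : V} (hv : v ∉ F) (u : V) :
    sgn R (insert v F) u = (if v < u then -1 else 1) * sgn R F u := by
  rw [sgn, sgn, Finset.filter_insert]
  split_ifs with h
  · rw [Finset.card_insert_of_notMem (fun hc => hv (Finset.mem_of_mem_filter _ hc)), pow_succ',
      neg_one_mul]
  · rw [one_mul]

lemma ite_lt_mul_add_ite_lt_mul {u v : V} (hne : u ≠ v) (a b : R) :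
    (if u < v then (-1 : R) else 1) * a * b + (if v < u then (-1 : R) else 1) * b * a = 0 := by
  rcases lt_or_gt_of_ne hne with h | h
  · rw [if_pos h, if_neg (asymm h)]; ring
  · rw [if_neg (asymm h), if_pos h]; ring

lemma bd_single (F : Finset V) (c : R) :
    bd R (Finsupp.single F c) = c • ∑ v ∈ F, sgn R F v • Finsupp.single (F.erase v) (1 : R) := by
  simp [bd, Finsupp.lsum_single, LinearMap.toSpanSingleton_apply]

lemma contract_single (v : V) (F : Finset V) (c : R) :
    contract R v (Finsupp.single F c)
      = c • (if v ∈ F then sgn R F v • Finsupp.single (F.erase v) (1 : R) else 0) := by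
  simp [contract, Finsupp.lsum_single, LinearMap.toSpanSingleton_apply]

lemma cone_single (v : V) (F : Finset V) (c : R) :
    cone R v (Finsupp.single F c)
      = c • (if v ∈ F then 0 else sgn R F v • Finsupp.single (insert v F) (1 : R)) := by
  simp [cone, Finsupp.lsum_single, LinearMap.toSpanSingleton_apply]

lemma contract_apply (v : V) (Z : Finset V →₀ R) (G : Finset V) :
    contract R v Z G = if v ∈ G then 0 else sgn R G v * Z (insert v G) := by
  induction Z using Finsupp.induction_linear with
  | zero => simp
  | add Z Z' hZ hZ' => simp only [map_add, Finsupp.add_apply, hZ, hZ']; split_ifs <;> ring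
  | single F c =>
    rw [contract_single]
    by_cases hvF : v ∈ F
    · by_cases hFG : F = insert v G ∧ v ∉ G
      · obtain ⟨rfl, hvG⟩ := hFG
        simp [hvG, sgn_insert_self, mul_comm]
      · have : F.erase v ≠ G := by
          rintro rfl
          exact hFG ⟨(Finset.insert_erase hvF).symm, Finset.notMem_erase v F⟩
        split_ifs with hvG <;> simp_all
    · have : insert v G ≠ F := fun h => hvF (h ▸ Finset.mem_insert_self v G)
      simp [hvF, this]

lemma cone_apply (v : V) (Z : Finset V →₀ R) (F : Finset V) :
    cone R v Z F = if v ∈ F then sgn R F v * Z (F.erase v) else 0 := by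
  induction Z using Finsupp.induction_linear with
  | zero => simp
  | add Z Z' hZ hZ' => simp only [map_add, Finsupp.add_apply, hZ, hZ']; split_ifs <;> ring
  | single G c =>
    rw [cone_single]
    by_cases hvG : v ∈ G
    · have : G ≠ F.erase v := fun h => Finset.notMem_erase v F (h ▸ hvG)
      simp [hvG, this]
    · by_cases hGF : insert v G = F
      · subst hGF
        simp [hvG, sgn_insert_self, mul_comm]
      · split_ifs with hvF
        · have : G ≠ F.erase v := fun h => hGF (h ▸ Finset.insert_erase hvF)
          simp [hGF, this]
        · simp [hGF]

lemma contract_cone_add_cone_contract_of_ne {u v : V} (hne : u ≠ v) (Z : Finset V →₀ R) :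
    contract R u (cone R v Z) + cone R v (contract R u Z) = 0 := by
  ext F
  rw [Finsupp.add_apply, Finsupp.coe_zero, Pi.zero_apply, contract_apply u (cone R v Z) F,
    cone_apply v (contract R u Z) F]
  by_cases huF : u ∈ F
  · by_cases hvF : v ∈ F
    · rw [if_pos huF, if_pos hvF, contract_apply, if_pos (Finset.mem_erase.2 ⟨hne, huF⟩)]
      ring
    · rw [if_pos huF, if_neg hvF, add_zero]
  · have hvuF : v ∈ insert u F ↔ v ∈ F := by simp [hne.symm]
    by_cases hvF : v ∈ F
    · rw [if_neg huF, if_pos hvF, cone_apply, if_pos (hvuF.2 hvF), contract_apply,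
        if_neg (fun h => huF (Finset.mem_of_mem_erase h)), Finset.erase_insert_of_ne hne,
        sgn_insert huF v, sgn_erase hvF u]
      linear_combination (Z (insert u (F.erase v))) * ite_lt_mul_add_ite_lt_mul hne
        (sgn R F v) (sgn R F u)
    · rw [if_neg huF, if_neg hvF, cone_apply, if_neg (hvuF.not.2 hvF)]
      ring

lemma contract_cone_add_cone_contract_self (v : V) (Z : Finset V →₀ R) :
    contract R v (cone R v Z) + cone R v (contract R v Z) = Z := by
  ext F
  rw [Finsupp.add_apply, contract_apply v (cone R v Z) F, cone_apply v (contract R v Z) F]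
  by_cases hvF : v ∈ F
  · rw [if_pos hvF, if_pos hvF, zero_add, contract_apply, if_neg (Finset.notMem_erase v F),
      sgn_erase_self, Finset.insert_erase hvF, ← mul_assoc, sgn_mul_self, one_mul]
  · rw [if_neg hvF, if_neg hvF, add_zero, cone_apply, if_pos (Finset.mem_insert_self v F),
      sgn_insert_self, Finset.erase_insert hvF, ← mul_assoc, sgn_mul_self, one_mul]

lemma contract_contract_self (v : V) (Z : Finset V →₀ R) : contract R v (contract R v Z) = 0 := by
  ext G
  rw [contract_apply, Finsupp.coe_zero, Pi.zero_apply]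
  split_ifs with hvG
  · rfl
  · rw [contract_apply, if_pos (Finset.mem_insert_self v G), mul_zero]

lemma contract_contract_add_contract_contract_of_ne {u v : V} (hne : u ≠ v)
    (Z : Finset V →₀ R) : contract R u (contract R v Z) + contract R v (contract R u Z) = 0 := by
  ext G
  rw [Finsupp.add_apply, Finsupp.coe_zero, Pi.zero_apply, contract_apply u (contract R v Z) G,
    contract_apply v (contract R u Z) G]
  by_cases huG : u ∈ G
  · by_cases hvG : v ∈ G
    · rw [if_pos huG, if_pos hvG, add_zero]
    · rw [if_pos huG, if_neg hvG, contract_apply, if_pos (Finset.mem_insert_of_mem huG)]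
      ring
  · by_cases hvG : v ∈ G
    · rw [if_neg huG, if_pos hvG, contract_apply, if_pos (Finset.mem_insert_of_mem hvG)]
      ring
    · rw [if_neg huG, if_neg hvG, contract_apply, contract_apply,
        if_neg (by simp [hne.symm, hvG] : v ∉ insert u G),
        if_neg (by simp [hne, huG] : u ∉ insert v G), sgn_insert huG v, sgn_insert hvG u,
        Finset.insert_comm v u G]
      linear_combination (Z (insert u (insert v G))) * ite_lt_mul_add_ite_lt_mul hne
        (sgn R G v) (sgn R G u)

lemma bd_eq_sum_contract [Fintype V] (Z : Finset V →₀ R) :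
    bd R Z = ∑ u, contract R u Z := by
  induction Z using Finsupp.induction_linear with
  | zero => simp
  | add Z Z' hZ hZ' => simp only [map_add, hZ, hZ', Finset.sum_add_distrib]
  | single F c =>
    simp only [bd_single, contract_single, smul_ite, smul_zero, Finset.sum_ite_mem,
      Finset.univ_inter, Finset.smul_sum]

lemma bd_cone_add_cone_bd [Fintype V] (v : V) (Z : Finset V →₀ R) :
    bd R (cone R v Z) + cone R v (bd R Z) = Z := by
  rw [bd_eq_sum_contract, bd_eq_sum_contract, map_sum, ← Finset.sum_add_distrib,
    Finset.sum_eq_single_of_mem v (Finset.mem_univ v)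
      (fun u _ hu => contract_cone_add_cone_contract_of_ne hu Z)]
  exact contract_cone_add_cone_contract_self v Z

lemma bd_cone_of_bd_eq_zero [Fintype V] (v : V) {Z : Finset V →₀ R} (hZ : bd R Z = 0) :
    bd R (cone R v Z) = Z := by
  simpa [hZ] using bd_cone_add_cone_bd v Z

lemma bd_contract [Fintype V] (v : V) (Z : Finset V →₀ R) :
    bd R (contract R v Z) = - contract R v (bd R Z) := by
  refine eq_neg_of_add_eq_zero_left ?_
  rw [bd_eq_sum_contract, bd_eq_sum_contract, map_sum, ← Finset.sum_add_distrib,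
    Finset.sum_eq_single_of_mem v (Finset.mem_univ v)
      (fun u _ hu => contract_contract_add_contract_contract_of_ne hu Z),
    contract_contract_self, add_zero]

lemma mem_support_cone {v : V} {Z : Finset V →₀ R} {F : Finset V}
    (h : F ∈ (cone R v Z).support) : v ∈ F ∧ F.erase v ∈ Z.support := by
  rw [Finsupp.mem_support_iff, cone_apply] at h
  split_ifs at h with hv
  · exact ⟨hv, Finsupp.mem_support_iff.2 fun h0 => h (by rw [h0, mul_zero])⟩
  · exact absurd rfl h

lemma mem_support_contract {v : V} {Z : Finset V →₀ R} {G : Finset V}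
    (h : G ∈ (contract R v Z).support) : v ∉ G ∧ insert v G ∈ Z.support := by
  rw [Finsupp.mem_support_iff, contract_apply] at h
  split_ifs at h with hv
  · exact absurd rfl h
  · exact ⟨hv, Finsupp.mem_support_iff.2 fun h0 => h (by rw [h0, mul_zero])⟩

lemma sub_cone_contract_apply (v : V) (Z : Finset V →₀ R) (F : Finset V) :
    (Z - cone R v (contract R v Z)) F = if v ∈ F then 0 else Z F := by
  rw [Finsupp.sub_apply, cone_apply]
  split_ifs with hv
  · rw [contract_apply, if_neg (Finset.notMem_erase v F), sgn_erase_self, Finset.insert_erase hv,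
      ← mul_assoc, sgn_mul_self, one_mul, sub_self]
  · rw [sub_zero]

lemma eq_zero_of_bd_single_eq_zero {A : Finset V} {c : R} (hA : A.Nonempty)
    (h : bd R (Finsupp.single A c) = 0) : c = 0 := by
  obtain ⟨v, hv⟩ := hA
  have hcoeff := congrArg (· (A.erase v)) h
  simp only [bd_single, Finsupp.smul_apply, Finsupp.coe_zero, Pi.zero_apply,
    Finset.sum_apply', Finsupp.single_apply] at hcoeff
  rw [Finset.sum_eq_single_of_mem v hv fun u hu huv => by
    rw [if_neg fun h => huv ((Finset.erase_inj A hu).1 h), smul_zero]] at hcoeff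
  simpa [sgn] using hcoeff

end FinsetChain

section FaceFamily

variable {V : Type}

def cellsIn (𝔉 : Set (Finset V)) (T : Finset V) (j : ℕ) : Set (Finset V) :=
  {F | F ∈ 𝔉 ∧ F ⊆ T ∧ F.card = j}

lemma cellsIn_mono {𝔉 : Set (Finset V)} {T T' : Finset V} (hTT' : T ⊆ T') (j : ℕ) :
    cellsIn 𝔉 T j ⊆ cellsIn 𝔉 T' j :=
  fun _ ⟨hF, hFT, hcard⟩ => ⟨hF, hFT.trans hTT', hcard⟩

variable [DecidableEq V]

def IsCompleteIn (𝔉 : Set (Finset V)) (W : Finset V) : Prop :=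
  ∀ u ∈ W, ∀ v ∈ W, u ≠ v → ({u, v} : Finset V) ∈ 𝔉

/-- The banner condition with threshold `m`: `K.IsBanner` is `IsBannerFrom K.faces K.dimP1`. -/
def IsBannerFrom (𝔉 : Set (Finset V)) (m : ℕ) : Prop :=
  ∀ W : Finset V, IsCompleteIn 𝔉 W → (∃ v ∈ W, W.erase v ∈ 𝔉) → m ≤ W.card → W ∈ 𝔉

def linkFamily (𝔉 : Set (Finset V)) (v : V) : Set (Finset V) := {G | v ∉ G ∧ insert v G ∈ 𝔉}

variable {𝔉 : Set (Finset V)}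

lemma IsCompleteIn.mono {T W : Finset V} (hT : IsCompleteIn 𝔉 T) (hWT : W ⊆ T) :
    IsCompleteIn 𝔉 W :=
  fun u hu v hv => hT u (hWT hu) v (hWT hv)

/-- Grow `F` to `T` one vertex at a time: each step is a complete critical set. -/
lemma IsBannerFrom.mem_of_isCompleteIn {m : ℕ} (hban : IsBannerFrom 𝔉 m) {F T : Finset V}
    (hT : IsCompleteIn 𝔉 T) (hF : F ∈ 𝔉) (hFT : F ⊆ T) (hm : m ≤ F.card + 1) : T ∈ 𝔉 := by
  suffices h : ∀ A ⊆ T \ F, F ∪ A ∈ 𝔉 by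
    simpa [Finset.union_sdiff_of_subset hFT] using h (T \ F) subset_rfl
  intro A
  induction A using Finset.induction_on with
  | empty => simpa using hF
  | insert a A haA ih =>
    intro hA
    obtain ⟨haT, hAT⟩ := Finset.insert_subset_iff.1 hA
    have haFA : a ∉ F ∪ A := by simp [(Finset.mem_sdiff.1 haT).2, haA]
    rw [Finset.union_insert]
    refine hban _ (hT.mono ?_) ⟨a, Finset.mem_insert_self a _, ?_⟩ ?_
    · exact Finset.insert_subset (Finset.sdiff_subset haT)
        (Finset.union_subset hFT (hAT.trans Finset.sdiff_subset))
    · rw [Finset.erase_insert haFA]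
      exact ih hAT
    · rw [Finset.card_insert_of_notMem haFA]
      have := Finset.card_le_card (Finset.subset_union_left (s₂ := A) (s₁ := F))
      omega

lemma IsLowerSet.linkFamily (h𝔉 : IsLowerSet 𝔉) (v : V) : IsLowerSet (linkFamily 𝔉 v) :=
  fun _ _ hGF hF => ⟨fun hv => hF.1 (hGF hv), h𝔉 (Finset.insert_subset_insert v hGF) hF.2⟩

lemma IsBannerFrom.linkFamily (h𝔉 : IsLowerSet 𝔉) {m : ℕ} (hban : IsBannerFrom 𝔉 (m + 1))
    (hm : 2 ≤ m) (v : V) : IsBannerFrom (linkFamily 𝔉 v) m := by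
  rintro W hW ⟨u, huW, hu⟩ hcard
  have hpartner : ∀ y ∈ W, ∃ z ∈ W, z ≠ y := fun y _ => Finset.exists_mem_ne (by omega) y
  have hvW : v ∉ W := fun hvW => by
    obtain ⟨z, hz, hzv⟩ := hpartner v hvW
    exact (hW v hvW z hz hzv.symm).1 (Finset.mem_insert_self v _)
  have hedge : ∀ y ∈ W, ({v, y} : Finset V) ∈ 𝔉 := fun y hy => by
    obtain ⟨z, hz, hzy⟩ := hpartner y hy
    exact h𝔉 (Finset.insert_subset_insert v (by simp)) (hW y hy z hz hzy.symm).2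
  have hcomplete : IsCompleteIn 𝔉 (insert v W) := by
    intro x hx y hy hxy
    rcases Finset.mem_insert.1 hx with rfl | hxW <;> rcases Finset.mem_insert.1 hy with hyv | hyW
    · exact absurd hyv.symm hxy
    · exact hedge y hyW
    · rw [hyv, Finset.pair_comm]
      exact hedge x hxW
    · exact h𝔉 (Finset.subset_insert v _) (hW x hxW y hyW hxy).2
  refine ⟨hvW, hban _ hcomplete ⟨u, Finset.mem_insert_of_mem huW, ?_⟩ ?_⟩
  · rw [Finset.erase_insert_of_ne (by rintro rfl; exact hvW huW)]
    exact hu.2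
  · rw [Finset.card_insert_of_notMem hvW]
    omega

lemma cellsIn_linkFamily_subset (h𝔉 : IsLowerSet 𝔉) (v : V) (T : Finset V) (j : ℕ) :
    cellsIn (linkFamily 𝔉 v) T j ⊆ cellsIn 𝔉 T j :=
  fun _ ⟨hF, hFT, hcard⟩ => ⟨h𝔉 (Finset.subset_insert v _) hF.2, hFT, hcard⟩

end FaceFamily

abbrev chainsIn (R : Type) [CommRing R] {V : Type} (𝔉 : Set (Finset V)) (T : Finset V) (j : ℕ) :
    Submodule R (Finset V →₀ R) :=
  Finsupp.supported R R (cellsIn 𝔉 T j)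

namespace FinsetChain

variable {R : Type} [CommRing R] {V : Type} [LinearOrder V] {𝔉 : Set (Finset V)}

variable (R) in
/-- `H̃_n(𝔉|_T; R) = 0`, where `n`-chains live on cells of cardinality `n + 1`. -/
def IsAcyclicAt (𝔉 : Set (Finset V)) (T : Finset V) (n : ℕ) : Prop :=
  ∀ Z ∈ chainsIn R 𝔉 T (n + 1), bd R Z = 0 → ∃ B ∈ chainsIn R 𝔉 T (n + 2), bd R B = Z

lemma cone_mem_chainsIn (h𝔉 : IsLowerSet 𝔉) {T : Finset V} (hT : T ∈ 𝔉) {v : V} (hv : v ∈ T)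
    {j : ℕ} {Z : Finset V →₀ R} (hZ : Z ∈ chainsIn R 𝔉 T j) :
    cone R v Z ∈ chainsIn R 𝔉 T (j + 1) := by
  intro F hF
  obtain ⟨hvF, hFZ⟩ := mem_support_cone hF
  obtain ⟨-, hFT, hcard⟩ := hZ hFZ
  have hFT' : F ⊆ T := by
    rw [← Finset.insert_erase hvF]
    exact Finset.insert_subset hv hFT
  exact ⟨h𝔉 hFT' hT, hFT', by rw [← Finset.card_erase_add_one hvF, hcard]⟩

lemma cone_mem_chainsIn_of_linkFamily {T : Finset V} {v : V} {j : ℕ} {B : Finset V →₀ R}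
    (hB : B ∈ chainsIn R (linkFamily 𝔉 v) T j) :
    cone R v B ∈ chainsIn R 𝔉 (insert v T) (j + 1) := by
  intro F hF
  obtain ⟨hvF, hFB⟩ := mem_support_cone hF
  obtain ⟨⟨-, hF𝔉⟩, hFT, hcard⟩ := hB hFB
  rw [Finset.insert_erase hvF] at hF𝔉
  refine ⟨hF𝔉, ?_, by rw [← Finset.card_erase_add_one hvF, hcard]⟩
  rw [← Finset.insert_erase hvF]
  exact Finset.insert_subset_insert v hFT

lemma contract_mem_chainsIn_linkFamily (h𝔉 : IsLowerSet 𝔉) {v w : V}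
    (hvw : ({v, w} : Finset V) ∉ 𝔉) {T : Finset V} {j : ℕ} {Z : Finset V →₀ R}
    (hZ : Z ∈ chainsIn R 𝔉 T (j + 1)) :
    contract R v Z ∈ chainsIn R (linkFamily 𝔉 v) ((T.erase v).erase w) j := by
  intro G hG
  obtain ⟨hvG, hGZ⟩ := mem_support_contract hG
  obtain ⟨hG𝔉, hGT, hcard⟩ := hZ hGZ
  have hwG : w ∉ G := fun hwG =>
    hvw (h𝔉 (Finset.insert_subset_insert v (Finset.singleton_subset_iff.2 hwG)) hG𝔉)
  refine ⟨⟨hvG, hG𝔉⟩, fun x hx => ?_, by rwa [Finset.card_insert_of_notMem hvG, add_left_inj] at hcard⟩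
  exact Finset.mem_erase.2 ⟨by rintro rfl; exact hwG hx,
    Finset.mem_erase.2 ⟨by rintro rfl; exact hvG hx, hGT (Finset.mem_insert_of_mem hx)⟩⟩

lemma sub_cone_contract_mem_chainsIn {T : Finset V} {v : V} {j : ℕ} {Z : Finset V →₀ R}
    (hZ : Z ∈ chainsIn R 𝔉 T j) : Z - cone R v (contract R v Z) ∈ chainsIn R 𝔉 (T.erase v) j := by
  intro F hF
  rw [Finset.mem_coe, Finsupp.mem_support_iff, sub_cone_contract_apply] at hF
  split_ifs at hF with hvF
  · exact absurd rfl hF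
  · obtain ⟨hF𝔉, hFT, hcard⟩ := hZ (Finsupp.mem_support_iff.2 hF)
    exact ⟨hF𝔉, fun x hx => Finset.mem_erase.2 ⟨by rintro rfl; exact hvF hx, hFT hx⟩, hcard⟩

/-- Such a chain is a multiple of the single cell `T`, and a nonempty cell is not a cycle. -/
lemma eq_zero_of_card_le {T : Finset V} {j : ℕ} {Z : Finset V →₀ R}
    (hZ : Z ∈ chainsIn R 𝔉 T (j + 1)) (hT : T.card ≤ j + 1) (hcyc : bd R Z = 0) : Z = 0 := by
  by_contra hZ0
  obtain ⟨F, hF⟩ := Finsupp.support_nonempty_iff.2 hZ0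
  have hcell : ∀ G ∈ Z.support, G = T := fun G hG => by
    obtain ⟨-, hGT, hcard⟩ := hZ hG
    exact Finset.eq_of_subset_of_card_le hGT (by omega)
  have hZT : Z = Finsupp.single T (Z T) :=
    Finsupp.support_subset_singleton.1 fun G hG => Finset.mem_singleton.2 (hcell G hG)
  obtain ⟨-, -, hFcard⟩ := hZ hF
  have hTne : T.Nonempty := hcell F hF ▸ Finset.card_pos.1 (by omega)
  rw [hZT] at hcyc hZ0
  exact hZ0 (by rw [eq_zero_of_bd_single_eq_zero hTne hcyc, Finsupp.single_zero])

lemma isAcyclicAt_of_isCompleteIn [Fintype V] (h𝔉 : IsLowerSet 𝔉) {n : ℕ}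
    (hban : IsBannerFrom 𝔉 (n + 2)) {T : Finset V} (hT : IsCompleteIn 𝔉 T) :
    IsAcyclicAt R 𝔉 T n := by
  intro Z hZ hcyc
  by_cases hcard : T.card ≤ n + 1
  · exact ⟨0, zero_mem _, by rw [map_zero, eq_zero_of_card_le hZ hcard hcyc]⟩
  by_cases hZ0 : Z = 0
  · exact ⟨0, zero_mem _, by rw [map_zero, hZ0]⟩
  obtain ⟨F, hF⟩ := Finsupp.support_nonempty_iff.2 hZ0
  obtain ⟨hF𝔉, hFT, hFcard⟩ := hZ hF
  have hT𝔉 : T ∈ 𝔉 := hban.mem_of_isCompleteIn hT hF𝔉 hFT (by omega)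
  obtain ⟨v, hv⟩ : T.Nonempty := Finset.card_pos.1 (by omega)
  exact ⟨cone R v Z, cone_mem_chainsIn h𝔉 hT𝔉 hv hZ, bd_cone_of_bd_eq_zero v hcyc⟩

/-- Split off the faces through `v`: they form `v * X` with `X` a cycle of the link, which avoids
`w`; a filling `B₁` of `X` turns `Z - v * X + B₁` into a cycle avoiding `v`. -/
lemma isAcyclicAt_succ_of_pair_not_mem [Fintype V] (h𝔉 : IsLowerSet 𝔉) {T : Finset V} {v w : V}
    (hv : v ∈ T) (hvw : ({v, w} : Finset V) ∉ 𝔉) {n : ℕ}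
    (hlink : IsAcyclicAt R (linkFamily 𝔉 v) ((T.erase v).erase w) n)
    (herase : IsAcyclicAt R 𝔉 (T.erase v) (n + 1)) : IsAcyclicAt R 𝔉 T (n + 1) := by
  intro Z hZ hcyc
  set X := contract R v Z
  have hXcyc : bd R X = 0 := by rw [bd_contract, hcyc, map_zero, neg_zero]
  obtain ⟨B₁, hB₁, hB₁X⟩ := hlink X (contract_mem_chainsIn_linkFamily h𝔉 hvw hZ) hXcyc
  have hB₁' : B₁ ∈ chainsIn R (linkFamily 𝔉 v) (T.erase v) (n + 2) :=
    Finsupp.supported_mono (cellsIn_mono (Finset.erase_subset w _) _) hB₁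
  have hY : Z - cone R v X + B₁ ∈ chainsIn R 𝔉 (T.erase v) (n + 2) :=
    add_mem (sub_cone_contract_mem_chainsIn hZ)
      (Finsupp.supported_mono (cellsIn_linkFamily_subset h𝔉 v _ _) hB₁')
  have hYcyc : bd R (Z - cone R v X + B₁) = 0 := by
    rw [map_add, map_sub, hcyc, bd_cone_of_bd_eq_zero v hXcyc, hB₁X, zero_sub, neg_add_cancel]
  obtain ⟨B₂, hB₂, hB₂Y⟩ := herase _ hY hYcyc
  have hcone : cone R v B₁ ∈ chainsIn R 𝔉 T (n + 3) := by
    simpa only [Finset.insert_erase hv] using cone_mem_chainsIn_of_linkFamily hB₁'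
  refine ⟨B₂ - cone R v B₁, sub_mem
    (Finsupp.supported_mono (cellsIn_mono (Finset.erase_subset v T) _) hB₂) hcone, ?_⟩
  have hbdcone : bd R (cone R v B₁) = B₁ - cone R v X := by
    rw [← hB₁X]
    exact eq_sub_of_add_eq (bd_cone_add_cone_bd v B₁)
  rw [map_sub, hB₂Y, hbdcone]
  abel

theorem isAcyclicAt_of_card_le [Fintype V] {n : ℕ} (h𝔉 : IsLowerSet 𝔉)
    (hban : IsBannerFrom 𝔉 (n + 2)) {T : Finset V} (hT : T.card ≤ 2 * n + 1) :
    IsAcyclicAt R 𝔉 T n := by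
  induction n generalizing 𝔉 T with
  | zero =>
    exact isAcyclicAt_of_isCompleteIn h𝔉 hban
      fun u hu v hv huv => absurd (Finset.card_le_one.1 hT u hu v hv) huv
  | succ n ih =>
    induction T using Finset.strongInduction with
    | H T ihT =>
    by_cases hcomplete : IsCompleteIn 𝔉 T
    · exact isAcyclicAt_of_isCompleteIn h𝔉 hban hcomplete
    simp only [IsCompleteIn, not_forall] at hcomplete
    obtain ⟨v, hv, w, hw, hvw, hpair⟩ := hcomplete
    have hw' : w ∈ T.erase v := Finset.mem_erase.2 ⟨Ne.symm hvw, hw⟩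
    refine isAcyclicAt_succ_of_pair_not_mem h𝔉 hv hpair
      (ih (h𝔉.linkFamily v) (hban.linkFamily h𝔉 (by omega) v) ?_)
      (ihT _ (Finset.erase_ssubset hv) ?_)
    · rw [Finset.card_erase_of_mem hw', Finset.card_erase_of_mem hv]
      omega
    · rw [Finset.card_erase_of_mem hv]
      omega

end FinsetChain

namespace SComplex

open FinsetChain

variable {R : Type} [CommRing R] {V : Type} [Fintype V] [LinearOrder V]

variable (R) in
noncomputable def toFinsetChain (K : SComplex V) (j : ℕ) : K.chains R j →ₗ[R] Finset V →₀ R :=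
  Finsupp.lmapDomain R R fun s : K.simplex j => s.1

lemma toFinsetChain_injective (K : SComplex V) (j : ℕ) :
    Function.Injective (K.toFinsetChain R j) :=
  Finsupp.mapDomain_injective Subtype.val_injective

lemma toFinsetChain_comp_bdry (K : SComplex V) (j : ℕ) :
    K.toFinsetChain R j ∘ₗ K.bdry R j = bd R ∘ₗ K.toFinsetChain R (j + 1) := by
  refine Finsupp.lhom_ext fun s b => ?_
  simp only [LinearMap.comp_apply, toFinsetChain, Finsupp.lmapDomain_apply,
    Finsupp.mapDomain_single, bd_single]
  rw [bdry]
  erw [Finsupp.lsum_single]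
  rw [LinearMap.toSpanSingleton_apply, Finsupp.mapDomain_smul]
  erw [Finsupp.mapDomain_finsetSum]
  rw [← Finset.sum_attach s.1]
  refine congrArg (b • ·) (Finset.sum_congr rfl fun v _ => ?_)
  erw [Finsupp.mapDomain_smul, Finsupp.mapDomain_single]
  rfl

lemma toFinsetChain_mem_chainsIn (K : SComplex V) {j : ℕ} (c : K.chains R j) :
    K.toFinsetChain R j c ∈ chainsIn R K.faces Finset.univ j := fun F hF => by
  obtain ⟨s, -, rfl⟩ := Finset.mem_image.1 (Finsupp.mapDomain_support hF)
  exact ⟨s.2.1, Finset.subset_univ _, s.2.2⟩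

lemma mem_range_toFinsetChain (K : SComplex V) {j : ℕ} {B : Finset V →₀ R}
    (hB : B ∈ chainsIn R K.faces Finset.univ j) : B ∈ LinearMap.range (K.toFinsetChain R j) := by
  rw [LinearMap.range_eq_map, ← Finsupp.supported_univ, toFinsetChain,
    Finsupp.lmapDomain_supported, Set.image_univ]
  exact fun F hF => ⟨⟨F, (hB hF).1, (hB hF).2.2⟩, rfl⟩

theorem subsingleton_Hred_of_isAcyclicAt (K : SComplex V) {n : ℕ}
    (h : IsAcyclicAt R K.faces Finset.univ n) : Subsingleton (K.Hred R n) := by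
  refine subsingleton_of_forall_eq 0 fun x => ?_
  obtain ⟨z, hz, hzx⟩ := Submodule.mem_map.1 x.2
  refine Subtype.ext ?_
  rw [← hzx, Submodule.mkQ_apply, Submodule.coe_zero, Submodule.Quotient.mk_eq_zero]
  have hcyc : bd R (K.toFinsetChain R (n + 1) z) = 0 := by
    rw [← LinearMap.comp_apply, ← toFinsetChain_comp_bdry, LinearMap.comp_apply,
      LinearMap.mem_ker.1 hz, map_zero]
  obtain ⟨B, hB, hBz⟩ := h _ (K.toFinsetChain_mem_chainsIn z) hcyc
  obtain ⟨b, rfl⟩ := K.mem_range_toFinsetChain hB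
  refine ⟨b, K.toFinsetChain_injective (n + 1) ?_⟩
  rw [← LinearMap.comp_apply, toFinsetChain_comp_bdry, LinearMap.comp_apply, hBz]

open Classical in
lemma vertexSet_induced (K : SComplex V) (S : Finset V) :
    (K.induced S).vertexSet = ↑(S.filter fun v => {v} ∈ K.faces) := by
  ext v
  simp [vertexSet, induced, and_comm]

open Classical in
lemma cellsIn_induced_univ (K : SComplex V) (S : Finset V) (j : ℕ) :
    cellsIn (K.induced S).faces Finset.univ j
      = cellsIn K.faces (S.filter fun v => {v} ∈ K.faces) j := by
  ext F
  simp only [cellsIn, induced, Set.mem_ofPred_eq, Finset.mem_univ, implies_true,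
    true_and, Finset.subset_iff, Finset.mem_filter]
  exact ⟨fun ⟨⟨hF, hFS⟩, hcard⟩ =>
      ⟨hF, fun v hv => ⟨hFS hv, K.down_closed hF (Finset.singleton_subset_iff.2 hv)⟩, hcard⟩,
    fun ⟨hF, hFS, hcard⟩ => ⟨⟨hF, fun v hv => (hFS hv).1⟩, hcard⟩⟩

end SComplex

theorem stmt13_general (k : Type) [Field k] {V : Type} [Fintype V] [LinearOrder V]
    (K : SComplex V) (d : ℕ) (hdim : K.dimP1 = d)
    (hbanner : K.IsBanner) (S : Finset V)
    (hhom : Nontrivial (SComplex.Hred k (K.induced S) (d - 2))) :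
    2 * d - 2 ≤ (K.induced S).vertexSet.ncard := by
  obtain hd | ⟨n, rfl⟩ : d < 2 ∨ ∃ n, d = n + 2 :=
    (lt_or_ge d 2).imp_right fun hd => ⟨d - 2, by omega⟩
  · omega
  classical
  rw [K.vertexSet_induced, Set.ncard_coe_finset]
  by_contra! hsmall
  have hacyc : FinsetChain.IsAcyclicAt k K.faces (S.filter fun v => {v} ∈ K.faces) n :=
    FinsetChain.isAcyclicAt_of_card_le (fun _ _ hGF hF => K.down_closed hF hGF)
      (fun W hW hcrit hcard => hbanner W hW hcrit (hdim ▸ hcard)) (by omega)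
  have : Subsingleton ((K.induced S).Hred k n) :=
    (K.induced S).subsingleton_Hred_of_isAcyclicAt
      (by simpa only [FinsetChain.IsAcyclicAt, chainsIn, SComplex.cellsIn_induced_univ] using hacyc)
  exact not_nontrivial _ (by simpa using hhom)

/-- Let `Δ` be a banner `(d-1)`-dimensional simplicial complex with `d ≥ 3`.
Then every induced subcomplex `Γ` of `Δ` with `H̃_{d-2}(Γ) ≠ 0` has at least
`2d - 2` vertices. -/
theorem stmt13 (k : Type) [Field k] {V : Type} [Fintype V] [LinearOrder V]
    (K : SComplex V) (d : ℕ) (hd : 3 ≤ d) (hdim : K.dimP1 = d)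
    (hbanner : K.IsBanner) (S : Finset V)
    (hhom : Nontrivial (SComplex.Hred k (K.induced S) (d - 2))) :
    2 * d - 2 ≤ (K.induced S).vertexSet.ncard :=
  stmt13_general k K d hdim hbanner S hhom
end

section
/- There exists, for every d ≥ 2, a (d+1)-dimensional banner simplicial complex supporting a nontrivial (d-1)-dimensional homology cycle but having only d + 3 vertices; namely, the boundary of a d-simplex with one facet joined to an external edge. -/
open Finset

/-!
The complex is `∂Δ_d` on `{0, …, d}` together with the full simplex on `{1, …, d + 2}`. Every
face through `0` is a proper subset of `{0, …, d}`. Hence a complete set of size at least `d + 2`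
avoids `0` (it would have to contain `d + 1` or `d + 2`, neither adjacent to `0`), so it is a face
of the full simplex: the complex is banner. The boundary of `{0, …, d}` is a `(d - 1)`-cycle with
coefficient `±1` on a facet through `0`, whereas every boundary vanishes on that facet because no
`d`-face contains `0`; so it represents a nonzero class.
-/

namespace Finset

variable {α : Type*} [LinearOrder α]

lemma card_filter_lt_erase_add_one {s : Finset α} {u v : α} (hv : v ∈ s) (hvu : v < u) :
    ((s.erase v).filter (· < u)).card + 1 = (s.filter (· < u)).card := by
  rw [filter_erase, card_erase_add_one (mem_filter.2 ⟨hv, hvu⟩)]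

lemma filter_lt_erase_of_lt {s : Finset α} {u v : α} (hvu : v < u) :
    (s.erase u).filter (· < v) = s.filter (· < v) := by
  rw [filter_erase, erase_eq_of_notMem]
  simp [hvu.le]

/-- Removing `v < u` first lowers the position of `u` by one; removing `u` first does not move
`v`. -/
lemma neg_one_pow_erase_erase_add_swap {R : Type*} [CommRing R] {s : Finset α} {u v : α}
    (hv : v ∈ s) (hvu : v < u) :
    (-1 : R) ^ ((s.filter (· < v)).card + ((s.erase v).filter (· < u)).card) +
      (-1 : R) ^ ((s.filter (· < u)).card + ((s.erase u).filter (· < v)).card) = 0 := by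
  rw [filter_lt_erase_of_lt hvu, ← card_filter_lt_erase_add_one hv hvu]
  ring

/-- The sign identity behind `∂ ∘ ∂ = 0`. -/
lemma sum_neg_one_pow_erase_erase {R : Type*} [CommRing R] (s : Finset α) (f : Finset α → R) :
    ∑ v ∈ s, ∑ u ∈ s.erase v, (-1 : R) ^ (s.filter (· < v)).card *
      ((-1 : R) ^ ((s.erase v).filter (· < u)).card * f ((s.erase v).erase u)) = 0 := by
  rw [sum_sigma']
  refine sum_involution (fun p _ => ⟨p.2, p.1⟩) ?_ ?_ ?_ fun _ _ => rfl
  · rintro ⟨v, u⟩ hp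
    obtain ⟨hv, huv, hu⟩ : v ∈ s ∧ u ≠ v ∧ u ∈ s := by simpa using hp
    simp only [erase_right_comm (a := u), ← mul_assoc, ← pow_add, ← add_mul]
    rcases huv.lt_or_gt with hlt | hlt
    · rw [add_comm, neg_one_pow_erase_erase_add_swap hu hlt, zero_mul]
    · rw [neg_one_pow_erase_erase_add_swap hv hlt, zero_mul]
  · rintro ⟨v, u⟩ hp _ h
    exact (mem_erase.1 (mem_sigma.1 hp).2).1 (congrArg Sigma.fst h)
  · rintro ⟨v, u⟩ hp
    obtain ⟨hv, huv, hu⟩ : v ∈ s ∧ u ≠ v ∧ u ∈ s := by simpa using hp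
    simpa using ⟨hu, huv.symm, hv⟩

end Finset

namespace SComplex

variable {V : Type} [Fintype V] [LinearOrder V]

lemma dimP1_eq_of_card_le {K : SComplex V} {n : ℕ} (hle : ∀ F ∈ K.faces, F.card ≤ n)
    {F : Finset V} (hF : F ∈ K.faces) (hcard : F.card = n) : K.dimP1 = n :=
  IsGreatest.csSup_eq ⟨⟨F, hF, hcard⟩, by rintro _ ⟨G, hG, rfl⟩; exact hle G hG⟩

lemma nontrivial_Hred_iff {R : Type} [CommRing R] {K : SComplex V} {n : ℕ} :
    Nontrivial (K.Hred R n) ↔ ¬ K.cycles R n ≤ K.bdries R n := by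
  rw [Submodule.nontrivial_iff_ne_bot, Ne, ← LinearMap.le_ker_iff_map, Submodule.ker_mkQ]

section Boundary

variable (K : SComplex V)

def eraseSimplex {j : ℕ} {s : Finset V} (hs : s.card = j + 1)
    (hf : ∀ v ∈ s, s.erase v ∈ K.faces) (v : s) : K.simplex j :=
  ⟨s.erase v, hf v v.2, by simp [card_erase_of_mem v.2, hs]⟩

@[simp]
lemma coe_eraseSimplex {j : ℕ} {s : Finset V} (hs : s.card = j + 1)
    (hf : ∀ v ∈ s, s.erase v ∈ K.faces) (v : s) : (K.eraseSimplex hs hf v).1 = s.erase v :=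
  rfl

/-- The boundary `∑ ± (s \ {v})` of `s`, as a chain of `K`; `s` itself need not be a face. -/
noncomputable def simplexBdry (R : Type) [CommRing R] (j : ℕ) (s : Finset V)
    (hs : s.card = j + 1) (hf : ∀ v ∈ s, s.erase v ∈ K.faces) : K.chains R j :=
  ∑ v ∈ s.attach,
    (-1 : R) ^ (s.filter (· < v.1)).card • Finsupp.single (K.eraseSimplex hs hf v) 1

lemma bdry_single (R : Type) [CommRing R] (j : ℕ) (s : K.simplex (j + 1)) :
    K.bdry R j (Finsupp.single s 1) =
      K.simplexBdry R j s.1 s.2.2 fun _ _ => K.down_closed s.2.1 (erase_subset _ _) := by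
  rw [bdry, Finsupp.lsum_single, LinearMap.toSpanSingleton_apply, one_smul]
  rfl

lemma single_one_apply (R : Type) [CommRing R] {j : ℕ} (a t : K.simplex j) :
    (Finsupp.single a 1 : K.chains R j) t = if a.1 = t.1 then 1 else 0 := by
  classical
  rw [Finsupp.single_apply]
  exact if_congr Subtype.ext_iff rfl rfl

lemma simplexBdry_apply (R : Type) [CommRing R] (j : ℕ) (s : Finset V) (hs : s.card = j + 1)
    (hf : ∀ v ∈ s, s.erase v ∈ K.faces) (t : K.simplex j) :
    K.simplexBdry R j s hs hf t =
      ∑ v ∈ s, (-1 : R) ^ (s.filter (· < v)).card * if s.erase v = t.1 then 1 else 0 := by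
  simp only [simplexBdry, Finsupp.finsetSum_apply, Finsupp.smul_apply, smul_eq_mul]
  rw [sum_congr rfl fun v _ => by rw [single_one_apply, coe_eraseSimplex]]
  exact sum_attach s fun v =>
    (-1 : R) ^ (s.filter (· < v)).card * if s.erase v = t.1 then 1 else 0

lemma simplexBdry_apply_erase (R : Type) [CommRing R] (j : ℕ) (s : Finset V)
    (hs : s.card = j + 1) (hf : ∀ v ∈ s, s.erase v ∈ K.faces) {x : V} (hx : x ∈ s)
    (t : K.simplex j) (ht : t.1 = s.erase x) :
    K.simplexBdry R j s hs hf t = (-1 : R) ^ (s.filter (· < x)).card := by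
  rw [simplexBdry_apply, sum_eq_single_of_mem x hx, ht, if_pos rfl, mul_one]
  intro v hv hvx
  rw [ht, if_neg fun h => hvx ((erase_inj s hv).1 h), mul_zero]

end Boundary

section Cycles

variable {R : Type} [CommRing R] {K : SComplex V}

lemma bdry_single_apply {j : ℕ} (s : K.simplex (j + 1)) (t : K.simplex j) :
    K.bdry R j (Finsupp.single s 1) t =
      ∑ v ∈ s.1, (-1 : R) ^ (s.1.filter (· < v)).card *
        if s.1.erase v = t.1 then 1 else 0 := by
  rw [bdry_single, simplexBdry_apply]

lemma simplexBdry_mem_cycles {n : ℕ} {s : Finset V} (hs : s.card = n + 2)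
    (hf : ∀ v ∈ s, s.erase v ∈ K.faces) :
    K.simplexBdry R (n + 1) s hs hf ∈ K.cycles R n := by
  rw [cycles, LinearMap.mem_ker]
  ext t
  simp only [simplexBdry, map_sum, map_smul, Finsupp.finsetSum_apply, Finsupp.smul_apply,
    smul_eq_mul, Finsupp.coe_zero, Pi.zero_apply]
  rw [sum_congr rfl fun v _ => by rw [bdry_single_apply, coe_eraseSimplex, mul_sum]]
  exact (sum_attach s _).trans (sum_neg_one_pow_erase_erase s fun G => if G = t.1 then 1 else 0)

lemma bdry_apply_eq_zero {n : ℕ} {x : V} (hx : ∀ F ∈ K.faces, F.card = n + 2 → x ∉ F)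
    (t : K.simplex (n + 1)) (hxt : x ∈ t.1) (z : K.chains R (n + 2)) :
    K.bdry R (n + 1) z t = 0 := by
  induction z using Finsupp.induction_linear with
  | zero => simp
  | add f g hf hg => rw [map_add, Finsupp.add_apply, hf, hg, add_zero]
  | single a b =>
    rw [← Finsupp.smul_single_one, map_smul, Finsupp.smul_apply, bdry_single_apply, smul_eq_mul]
    refine mul_eq_zero_of_right _ (sum_eq_zero fun u _ => ?_)
    rw [if_neg fun h => hx a.1 a.2.1 a.2.2 (erase_subset _ _ (h ▸ hxt)), mul_zero]

theorem nontrivial_Hred_of_hollow_simplex [Nontrivial R] {n : ℕ} {s : Finset V}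
    (hs : s.card = n + 2) (hf : ∀ v ∈ s, s.erase v ∈ K.faces) {y : V} (hy : y ∈ s)
    (hy_free : ∀ F ∈ K.faces, F.card = n + 2 → y ∉ F) : Nontrivial (K.Hred R n) := by
  obtain ⟨x, hx, hxy⟩ := exists_mem_ne (by omega : 1 < s.card) y
  let t : K.simplex (n + 1) := ⟨s.erase x, hf x hx, by rw [card_erase_of_mem hx, hs]; rfl⟩
  have hζt := K.simplexBdry_apply_erase R (n + 1) s hs hf hx t rfl
  rw [nontrivial_Hred_iff]
  intro hle
  obtain ⟨z, hz⟩ := hle (simplexBdry_mem_cycles hs hf)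
  have hbdry_t := bdry_apply_eq_zero hy_free t (mem_erase.2 ⟨hxy.symm, hy⟩) z
  rw [hz, hζt] at hbdry_t
  exact (isUnit_neg_one.pow _).ne_zero hbdry_t

end Cycles

end SComplex

section BannerExample

variable (d : ℕ)

def baseSimplex : Finset (Fin (d + 3)) := Iic ⟨d, by omega⟩

def joinFace : Finset (Fin (d + 3)) := univ.erase 0

/-- `∂Δ_d` on the vertices `0, …, d`, glued to the full simplex on
`F ∪ {a, b} = {1, …, d + 2}`. -/
def bannerExample : SComplex (Fin (d + 3)) where
  faces := {G | G ⊂ baseSimplex d ∨ G ⊆ joinFace d}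
  empty_mem := Or.inr (empty_subset _)
  down_closed _ _ hF hG := hF.imp hG.trans_ssubset hG.trans

variable {d}

lemma mem_baseSimplex {x : Fin (d + 3)} : x ∈ baseSimplex d ↔ x.val ≤ d := by
  rw [baseSimplex, mem_Iic, Fin.le_def]

lemma card_baseSimplex : (baseSimplex d).card = d + 1 :=
  Fin.card_Iic _

lemma card_joinFace : (joinFace d).card = d + 2 := by
  rw [joinFace, card_erase_of_mem (mem_univ _), card_univ, Fintype.card_fin]
  rfl

lemma card_le_of_mem_bannerExample {G : Finset (Fin (d + 3))}
    (hG : G ∈ (bannerExample d).faces) : G.card ≤ d + 2 := by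
  rcases hG with hG | hG
  · have := card_lt_card hG
    rw [card_baseSimplex] at this
    omega
  · exact card_joinFace (d := d) ▸ card_le_card hG

lemma ssubset_baseSimplex_of_zero_mem {G : Finset (Fin (d + 3))}
    (hG : G ∈ (bannerExample d).faces) (h0 : 0 ∈ G) : G ⊂ baseSimplex d :=
  hG.resolve_right fun h => (mem_erase.1 (h h0)).1 rfl

lemma dimP1_bannerExample : (bannerExample d).dimP1 = d + 2 :=
  SComplex.dimP1_eq_of_card_le (fun _ => card_le_of_mem_bannerExample) (Or.inr subset_rfl)
    card_joinFace

lemma isBanner_bannerExample : (bannerExample d).IsBanner := by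
  intro W hW _ hcard
  rw [dimP1_bannerExample] at hcard
  have h0 : (0 : Fin (d + 3)) ∉ W := by
    intro h0
    obtain ⟨x, hxW, hx⟩ := not_subset.1 fun h : W ⊆ baseSimplex d => by
      have := card_le_card h
      rw [card_baseSimplex] at this
      omega
    have hx0 : (0 : Fin (d + 3)) ≠ x := by
      rintro rfl
      exact hx (mem_baseSimplex.2 (Nat.zero_le d))
    have hedge := ssubset_baseSimplex_of_zero_mem (hW 0 h0 x hxW hx0) (mem_insert_self _ _)
    exact hx (hedge.subset (mem_insert_of_mem (mem_singleton_self x)))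
  exact Or.inr fun x hx => mem_erase.2 ⟨ne_of_mem_of_not_mem hx h0, mem_univ x⟩

lemma singleton_mem_bannerExample (hd : 1 ≤ d) (v : Fin (d + 3)) :
    {v} ∈ (bannerExample d).faces := by
  by_cases hv : v = 0
  · subst hv
    have h0 : (0 : Fin (d + 3)) ∈ baseSimplex d := mem_baseSimplex.2 (Nat.zero_le d)
    refine Or.inl (ssubset_of_subset_of_ne (singleton_subset_iff.2 h0) fun h => ?_)
    have := congrArg card h
    rw [card_singleton, card_baseSimplex] at this
    omega
  · exact Or.inr (singleton_subset_iff.2 (mem_erase.2 ⟨hv, mem_univ v⟩))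

lemma nontrivial_Hred_bannerExample (R : Type) [CommRing R] [Nontrivial R] (hd : 1 ≤ d) :
    Nontrivial ((bannerExample d).Hred R (d - 1)) := by
  have hcard : (baseSimplex d).card = d - 1 + 2 := by rw [card_baseSimplex]; omega
  refine SComplex.nontrivial_Hred_of_hollow_simplex hcard
    (fun v hv => Or.inl (erase_ssubset hv)) (y := 0) (mem_baseSimplex.2 (Nat.zero_le d))
    fun F hF hFcard h0 => ?_
  have := card_lt_card (ssubset_baseSimplex_of_zero_mem hF h0)
  omega

end BannerExample

/-- For every `d ≥ 2` there is a `(d+1)`-dimensional banner simplicial complex on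
only `d + 3` vertices supporting a nontrivial `(d-1)`-dimensional homology cycle. -/
theorem stmt18 (k : Type) [Field k] (d : ℕ) (hd : 2 ≤ d) :
    ∃ K : SComplex (Fin (d + 3)), K.dimP1 = d + 2 ∧ K.IsBanner ∧
      (∀ v : Fin (d + 3), ({v} : Finset (Fin (d + 3))) ∈ K.faces) ∧
      Nontrivial (SComplex.Hred k K (d - 1)) :=
  ⟨bannerExample d, dimP1_bannerExample, isBanner_bannerExample,
    singleton_mem_bannerExample (by omega), nontrivial_Hred_bannerExample k (by omega)⟩
end
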